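/- arXiv:2601.06766 — 2 statements merged into one kernel-verified Lean document; each statement's English description precedes it below -/
import Mathlib

section
/- Let A ∈ ℝ^{m×m} and D ∈ ℝ^{k×k} be symmetric positive definite matrices and B ∈ ℝ^{m×k}. If λ_min(A) · λ_min(D) > ‖B‖_F², then the block matrix G = [[A, B],[Bᵀ, D]] is symmetric positive definite. -/
/-!
Write `x = (u, v)`. The quadratic form of `[[A, B], [Bᵀ, D]]` is
`uᵀAu + 2 uᵀBv + vᵀDv ≥ a‖u‖² + 2 uᵀBv + d‖v‖²` with `a = λ_min(A)`, `d = λ_min(D)`, and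
Cauchy–Schwarz gives `(uᵀBv)² ≤ ‖B‖_F² ‖u‖² ‖v‖² < a d ‖u‖² ‖v‖²`. Since
`(a‖u‖² + d‖v‖²)² ≥ 4 a d ‖u‖² ‖v‖²`, the cross term cannot cancel the diagonal terms.
-/

open Matrix Finset Unitary
open scoped ComplexOrder

namespace Matrix

lemma IsHermitian.posSemidef_sub_smul_one {n 𝕜 : Type*} [Fintype n] [DecidableEq n] [RCLike 𝕜]
    {A : Matrix n n 𝕜} (hA : A.IsHermitian) {c : ℝ} (hc : ∀ i, c ≤ hA.eigenvalues i) :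
    (A - (c : 𝕜) • 1).PosSemidef := by
  have hdiag : diagonal (RCLike.ofReal ∘ (hA.eigenvalues - fun _ => c)) =
      diagonal (RCLike.ofReal ∘ hA.eigenvalues) - (c : 𝕜) • (1 : Matrix n n 𝕜) := by
    ext i j
    by_cases h : i = j <;> simp [h, Algebra.algebraMap_eq_smul_one]
  have hspec : A - (c : 𝕜) • 1 = conjStarAlgAut 𝕜 _ hA.eigenvectorUnitary
      (diagonal (RCLike.ofReal ∘ (hA.eigenvalues - fun _ => c))) := by
    conv_lhs => rw [hA.spectral_theorem]
    rw [hdiag, map_sub, map_smul, map_one]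
  rw [hspec, conjStarAlgAut_apply, isUnit_coe.posSemidef_star_right_conjugate_iff,
    posSemidef_diagonal_iff]
  simpa using hc

lemma IsHermitian.inf'_eigenvalues_mul_dotProduct_self_le {n : Type*} [Fintype n]
    [DecidableEq n] {A : Matrix n n ℝ} (hA : A.IsHermitian) (hn : (univ : Finset n).Nonempty)
    (x : n → ℝ) : univ.inf' hn hA.eigenvalues * (x ⬝ᵥ x) ≤ x ⬝ᵥ A *ᵥ x := by
  have hle (i : n) : univ.inf' hn hA.eigenvalues ≤ hA.eigenvalues i := inf'_le _ (mem_univ i)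
  have h := (hA.posSemidef_sub_smul_one hle).dotProduct_mulVec_nonneg x
  rw [star_trivial, sub_mulVec, smul_mulVec, one_mulVec, dotProduct_sub, dotProduct_smul,
    RCLike.ofReal_real_eq_id, id, smul_eq_mul] at h
  linarith

lemma sq_dotProduct_mulVec_le {m n R : Type*} [Fintype m] [Fintype n] [CommRing R]
    [LinearOrder R] [IsStrictOrderedRing R] (B : Matrix m n R) (u : m → R) (v : n → R) :
    (u ⬝ᵥ B *ᵥ v) ^ 2 ≤ (∑ i, ∑ j, B i j ^ 2) * ((u ⬝ᵥ u) * (v ⬝ᵥ v)) := by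
  have hform : u ⬝ᵥ B *ᵥ v = ∑ p : m × n, B p.1 p.2 * (u p.1 * v p.2) := by
    simp only [dotProduct, mulVec, Fintype.sum_prod_type, Finset.mul_sum]
    exact sum_congr rfl fun i _ => sum_congr rfl fun j _ => by ring
  have hnorms : (u ⬝ᵥ u) * (v ⬝ᵥ v) = ∑ p : m × n, (u p.1 * v p.2) ^ 2 := by
    simp only [dotProduct, Fintype.sum_prod_type, Finset.sum_mul_sum]
    exact sum_congr rfl fun i _ => sum_congr rfl fun j _ => by ring
  rw [hform, hnorms, ← Fintype.sum_prod_type' fun i j => B i j ^ 2]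
  exact sum_mul_sq_le_sq_mul_sq _ _ _

lemma sumElim_dotProduct_fromBlocks_transpose_mulVec {m n R : Type*} [Fintype m] [Fintype n]
    [CommSemiring R] (A : Matrix m m R) (B : Matrix m n R) (D : Matrix n n R)
    (u : m → R) (v : n → R) :
    Sum.elim u v ⬝ᵥ fromBlocks A B Bᵀ D *ᵥ Sum.elim u v =
      u ⬝ᵥ A *ᵥ u + 2 * (u ⬝ᵥ B *ᵥ v) + v ⬝ᵥ D *ᵥ v := by
  rw [fromBlocks_mulVec, Sum.elim_comp_inl, Sum.elim_comp_inr, sumElim_dotProduct_sumElim,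
    dotProduct_add, dotProduct_add, dotProduct_mulVec v Bᵀ, vecMul_transpose,
    dotProduct_comm (B *ᵥ v)]
  ring

end Matrix

lemma add_two_mul_add_pos_of_sq_le {a d p q s F : ℝ} (ha : 0 < a) (hd : 0 < d)
    (hp : 0 ≤ p) (hq : 0 ≤ q) (hpq : 0 < p + q) (hs : s ^ 2 ≤ F * (p * q)) (hF : F < a * d) :
    0 < a * p + 2 * s + d * q := by
  have hdiag : 0 < a * p + d * q := by
    rcases hp.eq_or_lt with rfl | hp' <;> nlinarith
  rcases (mul_nonneg hp hq).eq_or_lt with hpq_zero | hpq_pos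
  · have hs0 : s ^ 2 = 0 := le_antisymm (by simpa [← hpq_zero] using hs) (sq_nonneg s)
    rw [pow_eq_zero_iff two_ne_zero] at hs0
    linarith
  · -- `(a p + d q)² ≥ 4 a d p q > 4 s²`
    nlinarith [sq_nonneg (a * p - d * q), mul_lt_mul_of_pos_right hF hpq_pos]

/-- If `A`, `D` are symmetric positive definite and
`λ_min(A) · λ_min(D) > ‖B‖_F²`, then the block matrix `[[A, B], [Bᵀ, D]]`
is symmetric positive definite. -/
theorem blockMatrix_posDef_of_lmin_mul_lmin_gt_frobenius {m k : ℕ}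
    (hm : 0 < m) (hk : 0 < k)
    (A : Matrix (Fin m) (Fin m) ℝ) (D : Matrix (Fin k) (Fin k) ℝ)
    (B : Matrix (Fin m) (Fin k) ℝ)
    (hA : A.PosDef) (hD : D.PosDef)
    (hgap : (univ.inf' (univ_nonempty_iff.mpr (Fin.pos_iff_nonempty.mp hm))
        hA.1.eigenvalues) *
      (univ.inf' (univ_nonempty_iff.mpr (Fin.pos_iff_nonempty.mp hk))
        hD.1.eigenvalues) > ∑ i, ∑ j, (B i j) ^ 2) :
    (Matrix.fromBlocks A B Bᵀ D).PosDef := by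
  refine posDef_iff_dotProduct_mulVec.mpr
    ⟨hA.1.fromBlocks (conjTranspose_eq_transpose_of_trivial B) hD.1, fun x hx => ?_⟩
  obtain ⟨u, v, rfl⟩ : ∃ u v, x = Sum.elim u v :=
    ⟨x ∘ Sum.inl, x ∘ Sum.inr, (Sum.elim_comp_inl_inr x).symm⟩
  have hnorm : 0 < u ⬝ᵥ u + v ⬝ᵥ v := by
    rw [← sumElim_dotProduct_sumElim, ← star_trivial (Sum.elim u v)]
    exact dotProduct_star_self_pos_iff.mpr hx
  have hAu := hA.1.inf'_eigenvalues_mul_dotProduct_self_le ⟨⟨0, hm⟩, mem_univ _⟩ u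
  have hDv := hD.1.inf'_eigenvalues_mul_dotProduct_self_le ⟨⟨0, hk⟩, mem_univ _⟩ v
  have key := add_two_mul_add_pos_of_sq_le (p := u ⬝ᵥ u) (q := v ⬝ᵥ v)
    ((lt_inf'_iff _).mpr fun i _ => hA.eigenvalues_pos i)
    ((lt_inf'_iff _).mpr fun i _ => hD.eigenvalues_pos i)
    (dotProduct_self_star_nonneg u) (dotProduct_self_star_nonneg v) hnorm
    (sq_dotProduct_mulVec_le B u v) hgap
  rw [star_trivial, sumElim_dotProduct_fromBlocks_transpose_mulVec]
  linarith
end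

section
/- Under the hypotheses of the previous two statements, suppose additionally that all eigenvalues of Ã + BF_d have negative real part, set β = -2 max_i Re λ_i(Ã+BF_d) > 0, assume ‖exp((Ã+BF_d)t)‖₂² ≤ e^{-βt}, and F_d ≠ F_c. Then the distributed cost J_d* = ∫₀^∞ x(t)ᵀ(Q_xx + F_dᵀQ_uuF_d)x(t)dt with x(t) = exp((Ã+BF_d)t)x₀ and the centralized optimal cost J_c* = x₀ᵀQ̃x₀ satisfy 0 ≤ J_d* - J_c* ≤ (‖(F_d - F_c)ᵀ Q_uu (F_d - F_c)‖₂ / β) ‖x₀‖², with strict positivity of J_d* - J_c* whenever (F_d - F_c)x(t) is not identically zero. -/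
/-!
Along the closed loop `ẋ = (Ã + BF_d)x`, the Riccati equation turns into the completion-of-squares
identity `(F_d - F_c)ᵀQ_uu(F_d - F_c) = Q_xx + F_dᵀQ_uuF_d + Q̃(Ã + BF_d) + (Ã + BF_d)ᵀQ̃`, so the
running cost of `F_d` equals `-d/dt (xᵀQ̃x)` plus the excess `xᵀ(F_d - F_c)ᵀQ_uu(F_d - F_c)x ≥ 0`.
The exponential decay of `x` makes `xᵀQ̃x` vanish at infinity, so `J_d* - J_c*` is the integral of
the excess, which is bounded by `‖(F_d - F_c)ᵀQ_uu(F_d - F_c)‖₂ ‖x₀‖² ∫₀^∞ e^{-βt} dt`.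
-/

open Matrix MeasureTheory

/-- Spectral (operator 2-) norm of a real matrix, w.r.t. Euclidean norms. -/
noncomputable def specNorm {m k : ℕ} (B : Matrix (Fin m) (Fin k) ℝ) : ℝ :=
  ‖LinearMap.toContinuousLinearMap (Matrix.toEuclideanLin B)‖

/-- Euclidean norm of a vector in `ℝ^n`. -/
noncomputable def enorm {n : ℕ} (x : Fin n → ℝ) : ℝ :=
  Real.sqrt (∑ i, (x i) ^ 2)

lemma enorm_eq_norm_toLp {n : ℕ} (v : Fin n → ℝ) : _root_.enorm v = ‖WithLp.toLp 2 v‖ := by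
  simp [_root_.enorm, EuclideanSpace.norm_eq]

lemma enorm_mulVec_le {m k : ℕ} (M : Matrix (Fin m) (Fin k) ℝ) (v : Fin k → ℝ) :
    _root_.enorm (M *ᵥ v) ≤ specNorm M * _root_.enorm v := by
  simpa [enorm_eq_norm_toLp, specNorm] using
    (LinearMap.toContinuousLinearMap (toEuclideanLin M)).le_opNorm (WithLp.toLp 2 v)

lemma enorm_mulVec_sq_le_of_specNorm_sq_le {m k : ℕ} {M : Matrix (Fin m) (Fin k) ℝ} {c : ℝ}
    (hM : specNorm M ^ 2 ≤ c) (v : Fin k → ℝ) :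
    _root_.enorm (M *ᵥ v) ^ 2 ≤ _root_.enorm v ^ 2 * c :=
  calc _root_.enorm (M *ᵥ v) ^ 2 ≤ (specNorm M * _root_.enorm v) ^ 2 := by
        gcongr
        · exact Real.sqrt_nonneg _
        · exact enorm_mulVec_le M v
    _ ≤ _root_.enorm v ^ 2 * c := by
        rw [mul_pow, mul_comm]
        gcongr

lemma abs_dotProduct_mulVec_self_le {n : ℕ} (M : Matrix (Fin n) (Fin n) ℝ) (v : Fin n → ℝ) :
    |v ⬝ᵥ (M *ᵥ v)| ≤ specNorm M * _root_.enorm v ^ 2 := by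
  have hinner : v ⬝ᵥ (M *ᵥ v) = inner ℝ (WithLp.toLp 2 (M *ᵥ v)) (WithLp.toLp 2 v) := by
    simp [EuclideanSpace.inner_toLp_toLp]
  calc |v ⬝ᵥ (M *ᵥ v)| ≤ _root_.enorm (M *ᵥ v) * _root_.enorm v := by
        rw [hinner, enorm_eq_norm_toLp, enorm_eq_norm_toLp]
        exact abs_real_inner_le_norm _ _
    _ ≤ specNorm M * _root_.enorm v * _root_.enorm v := by
        gcongr
        · exact Real.sqrt_nonneg _
        · exact enorm_mulVec_le M v
    _ = specNorm M * _root_.enorm v ^ 2 := by ring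

section Derivatives

variable {𝕜 : Type*} [NontriviallyNormedField 𝕜]

theorem HasDerivAt.dotProduct {ι : Type*} [Fintype ι] {f g : 𝕜 → ι → 𝕜} {f' g' : ι → 𝕜} {t : 𝕜}
    (hf : HasDerivAt f f' t) (hg : HasDerivAt g g' t) :
    HasDerivAt (fun s => f s ⬝ᵥ g s) (f' ⬝ᵥ g t + f t ⬝ᵥ g') t :=
  (HasDerivAt.fun_sum fun i _ => (hasDerivAt_pi.1 hf i).mul (hasDerivAt_pi.1 hg i)).congr_deriv
    Finset.sum_add_distrib

theorem HasDerivAt.const_mulVec {ι κ : Type*} [Fintype κ] (M : Matrix ι κ 𝕜) {f : 𝕜 → κ → 𝕜}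
    {f' : κ → 𝕜} {t : 𝕜} (hf : HasDerivAt f f' t) :
    HasDerivAt (fun s => M *ᵥ f s) (M *ᵥ f') t :=
  hasDerivAt_pi.2 fun i =>
    HasDerivAt.fun_sum fun j _ => (hasDerivAt_pi.1 hf j).const_mul (M i j)

end Derivatives

section MatrixExp

-- `NormedSpace.exp` only sees the topology, so any normed-algebra structure on matrices will do.
attribute [local instance] Matrix.linftyOpNormedRing Matrix.linftyOpNormedAlgebra

theorem hasDerivAt_exp_smul_mulVec {ι : Type*} [Fintype ι] [DecidableEq ι] (A : Matrix ι ι ℝ)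
    (v : ι → ℝ) (t : ℝ) :
    HasDerivAt (fun s : ℝ => NormedSpace.exp (s • A) *ᵥ v)
      (A *ᵥ (NormedSpace.exp (t • A) *ᵥ v)) t := by
  let applyTo : Matrix ι ι ℝ →ₗ[ℝ] ι → ℝ :=
    { toFun := fun M => M *ᵥ v
      map_add' := fun M N => add_mulVec M N v
      map_smul' := fun c M => smul_mulVec c M v }
  rw [mulVec_mulVec]
  exact (LinearMap.toContinuousLinearMap applyTo).hasFDerivAt.comp_hasDerivAt t
      (hasDerivAt_exp_smul_const' A t)

end MatrixExp

theorem Matrix.riccati_completion_of_squares {ι κ R : Type*} [Fintype ι] [Fintype κ]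
    [DecidableEq κ] [CommRing R] (A : Matrix ι ι R) (B : Matrix ι κ R) (Qxx P : Matrix ι ι R)
    (Quu : Matrix κ κ R) (Fc F : Matrix κ ι R) (hQuu : Quuᵀ = Quu) (hdet : IsUnit Quu.det)
    (hP : Pᵀ = P) (hRiccati : P * A + Aᵀ * P + Qxx - P * B * Quu⁻¹ * Bᵀ * P = 0)
    (hFc : Fc = -(Quu⁻¹ * Bᵀ * P)) :
    (F - Fc)ᵀ * Quu * (F - Fc) = Qxx + Fᵀ * Quu * F + P * (A + B * F) + (A + B * F)ᵀ * P := by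
  have hQxx : Qxx = P * B * Quu⁻¹ * Bᵀ * P - P * A - Aᵀ * P := by
    rw [← sub_eq_zero.mp hRiccati]; abel
  have hFcQ : Fcᵀ * Quu = -(P * B) := by
    rw [hFc, transpose_neg, transpose_mul, transpose_mul, transpose_nonsing_inv, hQuu, hP,
      transpose_transpose, Matrix.neg_mul, Matrix.mul_assoc, Matrix.mul_assoc,
      nonsing_inv_mul _ hdet, Matrix.mul_one]
  have hQFc : Quu * Fc = -(Bᵀ * P) := by
    rw [hFc, Matrix.mul_neg, ← Matrix.mul_assoc, ← Matrix.mul_assoc, mul_nonsing_inv _ hdet,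
      Matrix.one_mul]
  calc (F - Fc)ᵀ * Quu * (F - Fc)
      = Fᵀ * Quu * F - Fᵀ * (Quu * Fc) - Fcᵀ * Quu * F + Fcᵀ * Quu * Fc := by
        simp only [transpose_sub, Matrix.sub_mul, Matrix.mul_sub, Matrix.mul_assoc]; abel
    _ = Qxx + Fᵀ * Quu * F + P * (A + B * F) + (A + B * F)ᵀ * P := by
        rw [hQFc, hFcQ, hQxx, hFc, transpose_add, transpose_mul]
        simp only [Matrix.mul_add, Matrix.add_mul, Matrix.mul_neg, Matrix.neg_mul,
          Matrix.mul_assoc, neg_neg]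
        abel

section ExponentialDecay

variable {n : ℕ} {x : ℝ → Fin n → ℝ} {β C : ℝ}

lemma abs_dotProduct_mulVec_le_of_decay
    (hdecay : ∀ t, 0 ≤ t → _root_.enorm (x t) ^ 2 ≤ C * Real.exp (-β * t))
    (M : Matrix (Fin n) (Fin n) ℝ) {t : ℝ} (ht : 0 ≤ t) :
    |x t ⬝ᵥ (M *ᵥ x t)| ≤ specNorm M * C * Real.exp (-β * t) := by
  rw [mul_assoc]
  exact (abs_dotProduct_mulVec_self_le M (x t)).trans
    (mul_le_mul_of_nonneg_left (hdecay t ht) (norm_nonneg _))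

lemma integrableOn_dotProduct_mulVec_of_decay (hx : Continuous x) (hβ : 0 < β)
    (hdecay : ∀ t, 0 ≤ t → _root_.enorm (x t) ^ 2 ≤ C * Real.exp (-β * t))
    (M : Matrix (Fin n) (Fin n) ℝ) :
    IntegrableOn (fun t => x t ⬝ᵥ (M *ᵥ x t)) (Set.Ioi 0) := by
  refine Integrable.mono' ((exp_neg_integrableOn_Ioi 0 hβ).const_mul (specNorm M * C))
    (by fun_prop) ?_
  filter_upwards [ae_restrict_mem measurableSet_Ioi] with t ht
  exact abs_dotProduct_mulVec_le_of_decay hdecay M ht.le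

lemma tendsto_dotProduct_mulVec_of_decay (hβ : 0 < β)
    (hdecay : ∀ t, 0 ≤ t → _root_.enorm (x t) ^ 2 ≤ C * Real.exp (-β * t))
    (M : Matrix (Fin n) (Fin n) ℝ) :
    Filter.Tendsto (fun t => x t ⬝ᵥ (M *ᵥ x t)) Filter.atTop (nhds 0) := by
  have hexp : Filter.Tendsto (fun t => Real.exp (-β * t)) Filter.atTop (nhds 0) :=
    Real.tendsto_exp_atBot.comp (Filter.tendsto_id.const_mul_atTop_of_neg (neg_neg_of_pos hβ))
  have hbound := hexp.const_mul (specNorm M * C)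
  rw [mul_zero] at hbound
  refine squeeze_zero_norm' ?_ hbound
  filter_upwards [Filter.eventually_ge_atTop 0] with t ht
  exact abs_dotProduct_mulVec_le_of_decay hdecay M ht

lemma setIntegral_dotProduct_mulVec_le_of_decay (hx : Continuous x) (hβ : 0 < β)
    (hdecay : ∀ t, 0 ≤ t → _root_.enorm (x t) ^ 2 ≤ C * Real.exp (-β * t))
    (M : Matrix (Fin n) (Fin n) ℝ) :
    ∫ t in Set.Ioi 0, x t ⬝ᵥ (M *ᵥ x t) ≤ specNorm M * C / β := by
  calc ∫ t in Set.Ioi 0, x t ⬝ᵥ (M *ᵥ x t)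
      ≤ ∫ t in Set.Ioi 0, specNorm M * C * Real.exp (-β * t) :=
        setIntegral_mono_on (integrableOn_dotProduct_mulVec_of_decay hx hβ hdecay M)
          ((exp_neg_integrableOn_Ioi 0 hβ).const_mul _) measurableSet_Ioi fun t ht =>
          (le_abs_self _).trans (abs_dotProduct_mulVec_le_of_decay hdecay M ht.le)
    _ = specNorm M * C / β := by
        rw [integral_const_mul, integral_exp_mul_Ioi (neg_neg_of_pos hβ), mul_zero,
          Real.exp_zero, neg_div_neg_eq, mul_one_div]

lemma setIntegral_dotProduct_mulVec_eq_of_lyapunov (A P M : Matrix (Fin n) (Fin n) ℝ)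
    (hxd : ∀ t, HasDerivAt x (A *ᵥ x t) t) (hβ : 0 < β)
    (hdecay : ∀ t, 0 ≤ t → _root_.enorm (x t) ^ 2 ≤ C * Real.exp (-β * t))
    (hLyap : Aᵀ * P + P * A + M = 0) :
    ∫ t in Set.Ioi 0, x t ⬝ᵥ (M *ᵥ x t) = x 0 ⬝ᵥ (P *ᵥ x 0) := by
  have hx : Continuous x := continuous_iff_continuousAt.2 fun t => (hxd t).continuousAt
  have hV (t : ℝ) : HasDerivAt (fun s => x s ⬝ᵥ (P *ᵥ x s)) (-(x t ⬝ᵥ (M *ᵥ x t))) t := by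
    refine ((hxd t).dotProduct ((hxd t).const_mulVec P)).congr_deriv ?_
    rw [eq_neg_of_add_eq_zero_right hLyap, neg_mulVec, dotProduct_neg, neg_neg, add_mulVec,
      dotProduct_add, ← mulVec_mulVec, ← mulVec_mulVec, dotProduct_mulVec (x t) Aᵀ,
      vecMul_transpose]
  have hFTC := integral_Ioi_of_hasDerivAt_of_tendsto' (fun t _ => hV t)
    (integrableOn_dotProduct_mulVec_of_decay hx hβ hdecay M).neg
    (tendsto_dotProduct_mulVec_of_decay hβ hdecay P)
  rwa [integral_neg, zero_sub, neg_inj] at hFTC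

lemma setIntegral_dotProduct_mulVec_sub_eq_of_lyapunov (A P M N : Matrix (Fin n) (Fin n) ℝ)
    (hxd : ∀ t, HasDerivAt x (A *ᵥ x t) t) (hβ : 0 < β)
    (hdecay : ∀ t, 0 ≤ t → _root_.enorm (x t) ^ 2 ≤ C * Real.exp (-β * t))
    (hLyap : N = M + P * A + Aᵀ * P) :
    (∫ t in Set.Ioi 0, x t ⬝ᵥ (M *ᵥ x t)) - x 0 ⬝ᵥ (P *ᵥ x 0) =
      ∫ t in Set.Ioi 0, x t ⬝ᵥ (N *ᵥ x t) := by
  have hx : Continuous x := continuous_iff_continuousAt.2 fun t => (hxd t).continuousAt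
  have hint := integrableOn_dotProduct_mulVec_of_decay hx hβ hdecay
  have hcost := setIntegral_dotProduct_mulVec_eq_of_lyapunov A P (M - N) hxd hβ hdecay
    (by rw [hLyap]; abel)
  simp only [sub_mulVec, dotProduct_sub] at hcost
  rw [← hcost, integral_sub (hint M) (hint N)]
  ring

end ExponentialDecay

lemma dotProduct_transpose_mul_mul_mulVec {ι κ R : Type*} [Fintype ι] [Fintype κ]
    [CommSemiring R] (Q : Matrix κ κ R) (F : Matrix κ ι R) (v : ι → R) :
    v ⬝ᵥ ((Fᵀ * Q * F) *ᵥ v) = (F *ᵥ v) ⬝ᵥ (Q *ᵥ (F *ᵥ v)) := by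
  rw [← mulVec_mulVec, ← mulVec_mulVec, dotProduct_mulVec, vecMul_transpose]

lemma setIntegral_Ioi_pos_of_continuous {g : ℝ → ℝ} {a t₀ : ℝ} (hg : Continuous g)
    (hint : IntegrableOn g (Set.Ioi a)) (hnonneg : ∀ t, 0 ≤ g t) (ht₀ : a ≤ t₀)
    (hpos : g t₀ ≠ 0) : 0 < ∫ t in Set.Ioi a, g t := by
  rw [setIntegral_pos_iff_support_of_nonneg_ae (ae_of_all _ hnonneg) hint]
  have ht₀ : t₀ ∈ closure (Set.Ioi a) := by rwa [closure_Ioi]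
  exact (hg.isOpen_support.inter isOpen_Ioi).measure_pos volume
    (mem_closure_iff.1 ht₀ _ hg.isOpen_support hpos)

theorem distributed_vs_centralized_cost_gap_general {n m : ℕ}
    (Atil : Matrix (Fin n) (Fin n) ℝ) (B : Matrix (Fin n) (Fin m) ℝ)
    (Qxx Qtil : Matrix (Fin n) (Fin n) ℝ) (Quu : Matrix (Fin m) (Fin m) ℝ)
    (Fc Fd : Matrix (Fin m) (Fin n) ℝ) (β : ℝ) (x₀ : Fin n → ℝ)
    (hQuu : Quu.PosDef) (hQtil : Qtil.PosDef)
    (hRiccati : Qtil * Atil + Atilᵀ * Qtil + Qxx - Qtil * B * Quu⁻¹ * Bᵀ * Qtil = 0)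
    (hFc : Fc = -(Quu⁻¹ * Bᵀ * Qtil))
    (hβ : 0 < β)
    (hdecay : ∀ t : ℝ, 0 ≤ t →
      (specNorm (NormedSpace.exp (t • (Atil + B * Fd)))) ^ 2 ≤ Real.exp (-β * t))
    (x : ℝ → Fin n → ℝ)
    (hx : ∀ t : ℝ, x t = NormedSpace.exp (t • (Atil + B * Fd)) *ᵥ x₀)
    (Jd Jc : ℝ)
    (hJd : Jd = ∫ t in Set.Ici (0 : ℝ),
      (x t) ⬝ᵥ ((Qxx + Fdᵀ * Quu * Fd) *ᵥ (x t)))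
    (hJc : Jc = x₀ ⬝ᵥ (Qtil *ᵥ x₀)) :
    (0 ≤ Jd - Jc) ∧
    (Jd - Jc ≤ specNorm ((Fd - Fc)ᵀ * Quu * (Fd - Fc)) / β * (_root_.enorm x₀) ^ 2) ∧
    ((∃ t : ℝ, 0 ≤ t ∧ (Fd - Fc) *ᵥ (x t) ≠ 0) → 0 < Jd - Jc) := by
  set A := Atil + B * Fd
  set Mg := (Fd - Fc)ᵀ * Quu * (Fd - Fc)
  have hxd (t : ℝ) : HasDerivAt x (A *ᵥ x t) t := by
    simpa only [← funext hx, hx t] using hasDerivAt_exp_smul_mulVec A x₀ t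
  have hxc : Continuous x := continuous_iff_continuousAt.2 fun t => (hxd t).continuousAt
  have hxdecay (t : ℝ) (ht : 0 ≤ t) :
      _root_.enorm (x t) ^ 2 ≤ _root_.enorm x₀ ^ 2 * Real.exp (-β * t) := by
    rw [hx t]
    exact enorm_mulVec_sq_le_of_specNorm_sq_le (hdecay t ht) x₀
  have hx₀ : x 0 = x₀ := by rw [hx 0, zero_smul, NormedSpace.exp_zero, one_mulVec]
  have hgap : Jd - Jc = ∫ t in Set.Ioi 0, x t ⬝ᵥ (Mg *ᵥ x t) := by
    rw [hJd, hJc, integral_Ici_eq_integral_Ioi, ← hx₀]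
    exact setIntegral_dotProduct_mulVec_sub_eq_of_lyapunov A Qtil _ _ hxd hβ hxdecay
      (riccati_completion_of_squares Atil B Qxx Qtil Quu Fc Fd hQuu.isHermitian
        hQuu.det_pos.ne'.isUnit hQtil.isHermitian hRiccati hFc)
  have hg (t : ℝ) :
      x t ⬝ᵥ (Mg *ᵥ x t) = ((Fd - Fc) *ᵥ x t) ⬝ᵥ (Quu *ᵥ ((Fd - Fc) *ᵥ x t)) :=
    dotProduct_transpose_mul_mul_mulVec Quu (Fd - Fc) (x t)
  have hg_nonneg (t : ℝ) : 0 ≤ x t ⬝ᵥ (Mg *ᵥ x t) := by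
    simpa [hg] using hQuu.posSemidef.dotProduct_mulVec_nonneg ((Fd - Fc) *ᵥ x t)
  refine ⟨hgap ▸ setIntegral_nonneg measurableSet_Ioi fun t _ => hg_nonneg t, ?_, ?_⟩
  · rw [hgap, div_mul_eq_mul_div]
    exact setIntegral_dotProduct_mulVec_le_of_decay hxc hβ hxdecay Mg
  · rintro ⟨t₀, ht₀, hne⟩
    rw [hgap]
    refine setIntegral_Ioi_pos_of_continuous (by fun_prop)
      (integrableOn_dotProduct_mulVec_of_decay hxc hβ hxdecay Mg) hg_nonneg ht₀ ?_
    simpa [hg] using (hQuu.dotProduct_mulVec_pos hne).ne'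

/-- Performance gap between distributed and centralized LQR: with
`Q̃ ≻ 0` solving the centralized Riccati equation, `F_c = -Q_uu⁻¹BᵀQ̃`, a stabilizing
distributed gain `F_d ≠ F_c` whose closed loop satisfies `‖exp((Ã+BF_d)t)‖₂² ≤ e^{-βt}`,
the distributed cost `J_d*` and the centralized optimal cost `J_c* = x₀ᵀQ̃x₀` satisfy
`0 ≤ J_d* - J_c* ≤ (‖(F_d-F_c)ᵀQ_uu(F_d-F_c)‖₂/β)‖x₀‖²`, with strict positivity
whenever `(F_d-F_c)x(t)` is not identically zero. -/
theorem distributed_vs_centralized_cost_gap {n m : ℕ}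
    (Atil : Matrix (Fin n) (Fin n) ℝ) (B : Matrix (Fin n) (Fin m) ℝ)
    (Qxx Qtil : Matrix (Fin n) (Fin n) ℝ) (Quu : Matrix (Fin m) (Fin m) ℝ)
    (Fc Fd : Matrix (Fin m) (Fin n) ℝ) (β : ℝ) (x₀ : Fin n → ℝ)
    (hQxx : Qxx.PosSemidef) (hQuu : Quu.PosDef) (hQtil : Qtil.PosDef)
    (hRiccati : Qtil * Atil + Atilᵀ * Qtil + Qxx - Qtil * B * Quu⁻¹ * Bᵀ * Qtil = 0)
    (hFc : Fc = -(Quu⁻¹ * Bᵀ * Qtil))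
    (hHurwitz : ∀ μ ∈ spectrum ℂ ((Atil + B * Fd).map (algebraMap ℝ ℂ)), μ.re < 0)
    (hβ : 0 < β)
    (hβdef : β = -2 * (⨆ μ ∈ spectrum ℂ ((Atil + B * Fd).map (algebraMap ℝ ℂ)), μ.re))
    (hdecay : ∀ t : ℝ, 0 ≤ t →
      (specNorm (NormedSpace.exp (t • (Atil + B * Fd)))) ^ 2 ≤ Real.exp (-β * t))
    (hFdFc : Fd ≠ Fc)
    (x : ℝ → Fin n → ℝ)
    (hx : ∀ t : ℝ, x t = NormedSpace.exp (t • (Atil + B * Fd)) *ᵥ x₀)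
    (Jd Jc : ℝ)
    (hJd : Jd = ∫ t in Set.Ici (0 : ℝ),
      (x t) ⬝ᵥ ((Qxx + Fdᵀ * Quu * Fd) *ᵥ (x t)))
    (hJc : Jc = x₀ ⬝ᵥ (Qtil *ᵥ x₀)) :
    (0 ≤ Jd - Jc) ∧
    (Jd - Jc ≤ specNorm ((Fd - Fc)ᵀ * Quu * (Fd - Fc)) / β * (_root_.enorm x₀) ^ 2) ∧
    ((∃ t : ℝ, 0 ≤ t ∧ (Fd - Fc) *ᵥ (x t) ≠ 0) → 0 < Jd - Jc) :=
  distributed_vs_centralized_cost_gap_general Atil B Qxx Qtil Quu Fc Fd β x₀ hQuu hQtil hRiccati hFc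
    hβ hdecay x hx Jd Jc hJd hJc
end
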